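/- If the toric ideal P is generated by the binomials t^{a_1} − t^{b_1}, …, t^{a_m} − t^{b_m} (with a_i, b_i ∈ ℕ^n), then the vanishing ideal I(X) is generated by the binomials t^{D(a_1)} − t^{D(b_1)}, …, t^{D(a_m)} − t^{D(b_m)}, where D: ℤ^n → ℤ^n is the ℤ-linear map with D(e_i) = d_i e_i. -/

import Mathlib

open MvPolynomial

/-!
By Dedekind's independence of characters, applied to the characters
`x ↦ ∏ xᵢ ^ (vᵢ sᵢ)` of the torus `(Kˣ)ⁿ`, a homogeneous polynomial vanishing on `X` is a
combination of binomials `t^s - t^s'` with `|s| = |s'|` and `sᵢ ≡ s'ᵢ [MOD dᵢ]`. Writing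
`s = D q + r` and `s' = D q' + r`, such a binomial is `t^r (t^{D q} - t^{D q'})` where
`t^q - t^q'` lies in `P`. Hence `I(X)` is the image of `P` under `t^a ↦ t^{D a}`, which is
generated by the images of the generators of `P`; these are homogeneous since `P` is
graded by `deg tᵢ = dᵢ`, and vanish on `X` since `(xᵢ ^ vᵢ) ^ dᵢ = 1` when `β` generates `Kˣ`.
-/

theorem pow_pow_orderOf_pow_eq_one {G : Type*} [Group G] {β x : G}
    (hx : x ∈ Subgroup.zpowers β) (v : ℕ) : (x ^ v) ^ orderOf (β ^ v) = 1 := by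
  rw [← pow_mul, ← orderOf_dvd_iff_pow_eq_one]
  exact (orderOf_dvd_of_mem_zpowers hx).trans
    (orderOf_dvd_of_pow_eq_one (by rw [pow_mul, pow_orderOf_eq_one]))

theorem sum_fiber_eq_zero_of_sum_mul_monoidHom_eq_zero {G K ι : Type*} [MulOneClass G]
    [CommRing K] [IsDomain K] [DecidableEq (G →* K)] (ψ : ι → G →* K) (S : Finset ι)
    (c : ι → K) (h : ∀ g, ∑ i ∈ S, c i * ψ i g = 0) (γ : G →* K) :
    ∑ i ∈ S with ψ i = γ, c i = 0 := by
  set l : (G →* K) →₀ K := ∑ i ∈ S, Finsupp.single (ψ i) (c i)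
  have hl : l = 0 := by
    refine linearIndependent_iff.mp (linearIndependent_monoidHom G K) l ?_
    funext g
    simpa [l, map_sum] using h g
  simpa [l, Finsupp.finsetSum_apply, Finsupp.single_apply, Finset.sum_filter, eq_comm]
    using DFunLike.congr_fun hl γ

theorem sum_smul_mem_of_sum_eq_zero {R A ι : Type*} [CommSemiring R] [CommRing A] [Algebra R A]
    (I : Ideal A) (S : Finset ι) (c : ι → R) (x : ι → A) (hc : ∑ i ∈ S, c i = 0)
    (hx : ∀ i ∈ S, ∀ j ∈ S, x i - x j ∈ I) : ∑ i ∈ S, c i • x i ∈ I := by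
  rcases S.eq_empty_or_nonempty with rfl | ⟨j, hj⟩
  · simp
  have hsum : ∑ i ∈ S, c i • x i = ∑ i ∈ S, c i • (x i - x j) := by
    simp only [smul_sub, Finset.sum_sub_distrib, ← Finset.sum_smul, hc, zero_smul, sub_zero]
  rw [hsum]
  exact Ideal.sum_mem _ fun i hi => Submodule.smul_of_tower_mem I (c i) (hx i hi j hj)

namespace MvPolynomial

variable {σ : Type*}

theorem mem_of_sum_coeff_fiber_eq_zero {R γ : Type*} [CommRing R] [DecidableEq γ]
    (I : Ideal (MvPolynomial σ R)) (f : MvPolynomial σ R) (φ : (σ →₀ ℕ) → γ)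
    (hfib : ∀ c, ∑ s ∈ f.support with φ s = c, coeff s f = 0)
    (hmon : ∀ s ∈ f.support, ∀ t ∈ f.support, φ s = φ t → monomial s (1 : R) - monomial t 1 ∈ I) :
    f ∈ I := by
  have hf : f = ∑ c ∈ f.support.image φ,
      ∑ s ∈ f.support with φ s = c, coeff s f • monomial s (1 : R) := by
    rw [Finset.sum_fiberwise_of_maps_to fun s hs => Finset.mem_image_of_mem φ hs]
    conv_lhs => rw [f.as_sum]
    simp only [smul_monomial, smul_eq_mul, mul_one]
  rw [hf]
  refine Ideal.sum_mem _ fun c _ => sum_smul_mem_of_sum_eq_zero I _ _ _ (hfib c) ?_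
  intro s hs t ht
  rw [Finset.mem_filter] at hs ht
  exact hmon s hs.1 t ht.1 (hs.2.trans ht.2.symm)

variable [Fintype σ]

theorem aeval_pow_prod_X_pow {R A : Type*} [CommSemiring R] [CommSemiring A] [Algebra R A]
    (p : σ → A) (d c : σ → ℕ) :
    aeval (fun i => p i ^ d i) (∏ i, X i ^ c i : MvPolynomial σ R) = ∏ i, p i ^ (d i * c i) := by
  simp only [map_prod, map_pow, aeval_X, pow_mul]

theorem isHomogeneous_prod_X_pow_sub_prod_X_pow {R : Type*} [CommRing R] {s t : σ → ℕ}
    (h : ∑ i, s i = ∑ i, t i) :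
    ((∏ i, X i ^ s i) - ∏ i, X i ^ t i : MvPolynomial σ R).IsHomogeneous (∑ i, s i) := by
  have hprod (c : σ → ℕ) : (∏ i, X i ^ c i : MvPolynomial σ R).IsHomogeneous (∑ i, c i) :=
    IsHomogeneous.prod _ _ _ fun i _ => by simpa using (isHomogeneous_X R i).pow (c i)
  exact (hprod s).sub (h ▸ hprod t)


section Toric

variable {R : Type*} [CommRing R]

variable (R) in
noncomputable def toricIdeal (d : σ → ℕ) : Ideal (MvPolynomial σ R) :=
  RingHom.ker (aeval fun i => (Polynomial.X : Polynomial R) ^ d i : MvPolynomial σ R →ₐ[R] _)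

noncomputable def scaleExponents (d : σ → ℕ) : MvPolynomial σ R →ₐ[R] MvPolynomial σ R :=
  aeval fun i => X i ^ d i

theorem prod_X_pow_sub_prod_X_pow_mem_toricIdeal_iff [Nontrivial R] {d s t : σ → ℕ} :
    (∏ i, X i ^ s i) - ∏ i, X i ^ t i ∈ toricIdeal R d ↔ ∑ i, d i * s i = ∑ i, d i * t i := by
  rw [toricIdeal, RingHom.mem_ker, map_sub, sub_eq_zero, aeval_pow_prod_X_pow,
    aeval_pow_prod_X_pow, Finset.prod_pow_eq_pow_sum, Finset.prod_pow_eq_pow_sum,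
    Polynomial.X_pow_eq_monomial, Polynomial.X_pow_eq_monomial,
    Polynomial.monomial_left_inj one_ne_zero]

theorem prod_X_pow_sub_prod_X_pow_mem_map_scaleExponents [Nontrivial R] {d s t : σ → ℕ}
    (hmod : ∀ i, s i ≡ t i [MOD d i]) (hdeg : ∑ i, s i = ∑ i, t i) :
    (∏ i, X i ^ s i) - ∏ i, X i ^ t i ∈ (toricIdeal R d).map (scaleExponents d) := by
  have hs (i : σ) : s i = d i * (s i / d i) + s i % d i := (Nat.div_add_mod _ _).symm
  have ht (i : σ) : t i = d i * (t i / d i) + s i % d i := by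
    rw [hmod i]; exact (Nat.div_add_mod _ _).symm
  have hq : ∑ i, d i * (s i / d i) = ∑ i, d i * (t i / d i) := by
    rw [Finset.sum_congr rfl fun i _ => hs i, Finset.sum_congr rfl fun i _ => ht i,
      Finset.sum_add_distrib, Finset.sum_add_distrib] at hdeg
    exact Nat.add_right_cancel hdeg
  have hmem := Ideal.mem_map_of_mem (scaleExponents (R := R) d)
    (prod_X_pow_sub_prod_X_pow_mem_toricIdeal_iff.2 hq)
  rw [map_sub, scaleExponents, aeval_pow_prod_X_pow, aeval_pow_prod_X_pow] at hmem
  have hfactor : (∏ i, X i ^ s i) - ∏ i, X i ^ t i = (∏ i, X i ^ (s i % d i)) *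
      ((∏ i, X i ^ (d i * (s i / d i))) - ∏ i, (X i : MvPolynomial σ R) ^ (d i * (t i / d i))) := by
    rw [mul_sub, ← Finset.prod_mul_distrib, ← Finset.prod_mul_distrib]
    congr 1 <;> refine Finset.prod_congr rfl fun i _ => ?_ <;> rw [← pow_add, add_comm]
    exacts [congrArg _ (hs i), congrArg _ (ht i)]
  rw [hfactor]
  exact Ideal.mul_mem_left _ _ hmem

end Toric

section Torus

variable {K : Type*} [Field K]

noncomputable def torusCharacter (v : σ → ℕ) (s : σ →₀ ℕ) : (σ → Kˣ) →* K :=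
  (Units.coeHom K).comp (∏ i, (powMonoidHom (v i * s i)).comp (Pi.evalMonoidHom _ i))

theorem torusCharacter_apply (v : σ → ℕ) (s : σ →₀ ℕ) (x : σ → Kˣ) :
    torusCharacter v s x = ∏ i, (x i : K) ^ (v i * s i) := by
  simp [torusCharacter, MonoidHom.finsetProd_apply]

theorem eval_pow_eq_sum_coeff_mul_torusCharacter (v : σ → ℕ) (f : MvPolynomial σ K)
    (x : σ → Kˣ) :
    eval (fun i => (x i : K) ^ v i) f = ∑ s ∈ f.support, coeff s f * torusCharacter v s x := by
  simp only [eval_eq', torusCharacter_apply, pow_mul]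

theorem modEq_orderOf_of_torusCharacter_eq {v : σ → ℕ} {s t : σ →₀ ℕ}
    (h : torusCharacter (K := K) v s = torusCharacter v t) (β : Kˣ) (i : σ) :
    s i ≡ t i [MOD orderOf (β ^ v i)] := by
  classical
  have hsingle (u : σ →₀ ℕ) : torusCharacter v u (Pi.mulSingle i β) = ((β ^ v i) ^ u i : Kˣ) := by
    rw [torusCharacter_apply, Finset.prod_eq_single i]
    · simp [pow_mul]
    · intro j _ hji
      simp [Pi.mulSingle_eq_of_ne hji]
    · simp
  exact pow_eq_pow_iff_modEq.mp (Units.ext (by rw [← hsingle, ← hsingle, h]))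

theorem mem_map_scaleExponents_toricIdeal_of_isHomogeneous (β : Kˣ) (v : σ → ℕ)
    {f : MvPolynomial σ K} {e : ℕ} (hf : f.IsHomogeneous e)
    (hvan : ∀ x : σ → Kˣ, eval (fun i => (x i : K) ^ v i) f = 0) :
    f ∈ (toricIdeal K fun i => orderOf (β ^ v i)).map
      (scaleExponents fun i => orderOf (β ^ v i)) := by
  classical
  refine mem_of_sum_coeff_fiber_eq_zero _ f (torusCharacter v)
    (sum_fiber_eq_zero_of_sum_mul_monoidHom_eq_zero _ _ _ fun x => ?_) fun s hs t ht hst => ?_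
  · rw [← eval_pow_eq_sum_coeff_mul_torusCharacter, hvan]
  · have hdeg (u : σ →₀ ℕ) (hu : u ∈ f.support) : ∑ i, u i = e := by
      rw [← hf (mem_support_iff.mp hu), Finsupp.weight_apply, Finsupp.sum_fintype] <;> simp
    have hmon (u : σ →₀ ℕ) : monomial u (1 : K) = ∏ i, X i ^ u i := by
      rw [monomial_eq, C_1, one_mul, Finsupp.prod_pow]
    rw [hmon, hmon]
    exact prod_X_pow_sub_prod_X_pow_mem_map_scaleExponents
      (modEq_orderOf_of_torusCharacter_eq hst β) ((hdeg s hs).trans (hdeg t ht).symm)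

theorem eval_pow_prod_X_pow_orderOf_mul {β : Kˣ} (hβ : ∀ x : Kˣ, x ∈ Subgroup.zpowers β)
    (v c : σ → ℕ) (x : σ → Kˣ) :
    eval (fun i => (x i : K) ^ v i) (∏ i, X i ^ (orderOf (β ^ v i) * c i)) = 1 := by
  refine (map_prod _ _ _).trans (Finset.prod_eq_one fun i _ => ?_)
  rw [map_pow, eval_X, pow_mul, ← Units.val_pow_eq_pow_val, ← Units.val_pow_eq_pow_val,
    pow_pow_orderOf_pow_eq_one (hβ (x i)), Units.val_one, one_pow]

end Torus

end MvPolynomial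

theorem vanishing_ideal_generators_from_toric_generators_general
    (K : Type) [Field K] (n : ℕ)
    (v : Fin n → ℕ)
    (β : Kˣ) (hβ : ∀ x : Kˣ, x ∈ Subgroup.zpowers β)
    (d : Fin n → ℕ) (hd : ∀ i, d i = orderOf (β ^ v i))
    (IX : Ideal (MvPolynomial (Fin n) K))
    (hIX : IX = Ideal.span {f : MvPolynomial (Fin n) K |
      (∃ e, f.IsHomogeneous e) ∧
      ∀ x : Fin n → Kˣ, eval (fun i => (x i : K) ^ v i) f = 0})
    (P : Ideal (MvPolynomial (Fin n) K))
    (hP : P = RingHom.ker (aeval (fun i : Fin n => (Polynomial.X : Polynomial K) ^ d i) :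
      MvPolynomial (Fin n) K →ₐ[K] Polynomial K))
    (m : ℕ) (a b : Fin m → Fin n → ℕ)
    (hgen : P = Ideal.span (Set.range fun k =>
      (∏ i, X i ^ a k i) - ∏ i, (X i : MvPolynomial (Fin n) K) ^ b k i)) :
    IX = Ideal.span (Set.range fun k =>
      (∏ i, X i ^ (d i * a k i)) - ∏ i, (X i : MvPolynomial (Fin n) K) ^ (d i * b k i)) := by
  obtain rfl : d = fun i => orderOf (β ^ v i) := funext hd
  change P = toricIdeal K _ at hP
  have hspan : Ideal.span (Set.range fun k => (∏ i, X i ^ (orderOf (β ^ v i) * a k i)) -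
      ∏ i, (X i : MvPolynomial (Fin n) K) ^ (orderOf (β ^ v i) * b k i)) =
      P.map (scaleExponents fun i => orderOf (β ^ v i)) := by
    rw [hgen, Ideal.map_span, ← Set.range_comp]
    simp only [Function.comp_def, map_sub, scaleExponents, aeval_pow_prod_X_pow]
  rw [hIX, hspan]
  refine le_antisymm (Ideal.span_le.2 ?_) (hspan ▸ Ideal.span_mono ?_)
  · rintro f ⟨⟨e, hf⟩, hvan⟩
    exact hP ▸ mem_map_scaleExponents_toricIdeal_of_isHomogeneous β v hf hvan
  · rintro _ ⟨k, rfl⟩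
    have hgk : (∏ i, X i ^ a k i) - ∏ i, X i ^ b k i ∈ toricIdeal K fun i => orderOf (β ^ v i) :=
      hP ▸ hgen ▸ Ideal.subset_span ⟨k, rfl⟩
    have hk := prod_X_pow_sub_prod_X_pow_mem_toricIdeal_iff.1 hgk
    refine ⟨⟨_, isHomogeneous_prod_X_pow_sub_prod_X_pow hk⟩, fun x => ?_⟩
    rw [map_sub, eval_pow_prod_X_pow_orderOf_mul hβ, eval_pow_prod_X_pow_orderOf_mul hβ, sub_self]

/-- **Proposition.** Let `K = 𝔽_q`, `β` a generator of `Kˣ`, `d i = orderOf (β ^ v i)`.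
If the toric ideal `P` (kernel of `t_i ↦ y ^ d i`) is generated by the binomials
`t^{a k} - t^{b k}`, `k = 1, …, m`, then the vanishing ideal `IX` of the degenerate
projective torus parameterized by `x_i ^ v_i` is generated by the binomials
`t^{D (a k)} - t^{D (b k)}`, where `D e_i = d i • e_i`, i.e. `(D a) i = d i * a i`. -/
theorem vanishing_ideal_generators_from_toric_generators
    (K : Type) [Field K] [Fintype K] (n : ℕ) (hn : 2 ≤ n)
    (v : Fin n → ℕ) (hv : ∀ i, 0 < v i)
    (β : Kˣ) (hβ : ∀ x : Kˣ, x ∈ Subgroup.zpowers β)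
    (d : Fin n → ℕ) (hd : ∀ i, d i = orderOf (β ^ v i))
    (IX : Ideal (MvPolynomial (Fin n) K))
    (hIX : IX = Ideal.span {f : MvPolynomial (Fin n) K |
      (∃ e, f.IsHomogeneous e) ∧
      ∀ x : Fin n → Kˣ, eval (fun i => (x i : K) ^ v i) f = 0})
    (P : Ideal (MvPolynomial (Fin n) K))
    (hP : P = RingHom.ker (aeval (fun i : Fin n => (Polynomial.X : Polynomial K) ^ d i) :
      MvPolynomial (Fin n) K →ₐ[K] Polynomial K))
    (m : ℕ) (a b : Fin m → Fin n → ℕ)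
    (hgen : P = Ideal.span (Set.range fun k =>
      (∏ i, X i ^ a k i) - ∏ i, (X i : MvPolynomial (Fin n) K) ^ b k i)) :
    IX = Ideal.span (Set.range fun k =>
      (∏ i, X i ^ (d i * a k i)) - ∏ i, (X i : MvPolynomial (Fin n) K) ^ (d i * b k i)) :=
  vanishing_ideal_generators_from_toric_generators_general K n v β hβ d hd IX hIX P hP m a b hgen
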